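/- Let n, r be positive integers with r ≤ n, let U* ∈ ℝ^{n×r} have all row entries nonzero, set M* = U* U*ᵀ and Ω = {(i,j) ∈ [n]×[n] : M*_{ij} ≥ 0}. Suppose Assumptions 1 and 2 hold. Then there exists γ > 0 such that for every D ∈ ℝ^{n×r} with U*ᵀ D = Dᵀ U* (i.e., D in the horizontal space at U*), ‖(U* Dᵀ + D U*ᵀ)_Ω‖_F² ≥ γ · ‖D‖_F². Consequently, the quadratic form D ↦ (1/2)‖(U* Dᵀ + D U*ᵀ)_Ω‖_F², which is the Hessian quadratic form of F(U) = (1/4)‖(U Uᵀ − M*)_Ω‖_F² at U*, is bounded below by (γ/2)‖D‖_F² on the horizontal space. -/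

import Mathlib

open Matrix Classical

noncomputable section

/-- Frobenius norm of a real matrix. -/
def frobNorm {m k : Type*} [Fintype m] [Fintype k] (A : Matrix m k ℝ) : ℝ :=
  Real.sqrt (∑ i, ∑ j, (A i j) ^ 2)

/-- Frobenius (trace) inner product ⟨A, B⟩ = trace(Aᵀ B). -/
def frobInner {m k : Type*} [Fintype m] [Fintype k] (A B : Matrix m k ℝ) : ℝ :=
  ∑ i, ∑ j, A i j * B i j

/-- `(X)_Ω`: keep entries in `Ω`, zero out the rest. -/
def mask {m : Type*} (Ω : Set (m × m)) (X : Matrix m m ℝ) : Matrix m m ℝ :=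
  Matrix.of fun i j => if (i, j) ∈ Ω then X i j else 0

/-- ReLU sampling set: the nonnegative entries of `M`. -/
def reluSet {n : ℕ} (M : Matrix (Fin n) (Fin n) ℝ) : Set (Fin n × Fin n) :=
  {p | 0 ≤ M p.1 p.2}

/-- The objective `F(U) = (1/4) ‖(U Uᵀ − M)_Ω‖_F²`. -/
def objF {n r : ℕ} (Ω : Set (Fin n × Fin n)) (M : Matrix (Fin n) (Fin n) ℝ)
    (U : Matrix (Fin n) (Fin r) ℝ) : ℝ :=
  (1 / 4) * frobNorm (mask Ω (U * Uᵀ - M)) ^ 2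

/-- Rows of `U` whose sign pattern is `s` (`s j = true` means positive entry). -/
def signBlock {n r : ℕ} (U : Matrix (Fin n) (Fin r) ℝ) (s : Fin r → Bool) : Set (Fin n) :=
  {k | ∀ j, (0 < U k j ↔ s j = true)}

/-- A Gray-code ordering of the `2^r` sign patterns: a bijective enumeration in which
consecutive patterns differ in exactly one coordinate. -/
def IsGrayCode {r : ℕ} (s : Fin (2 ^ r) → Fin r → Bool) : Prop :=
  Function.Bijective s ∧
    ∀ i : ℕ, ∀ h : i + 1 < 2 ^ r,
      ∃! j : Fin r, s ⟨i, Nat.lt_of_succ_lt h⟩ j ≠ s ⟨i + 1, h⟩ j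

/-- Assumption 1: each orthant submatrix `U*_i` has full column rank `r`. -/
def Assumption1 {n r : ℕ} (U : Matrix (Fin n) (Fin r) ℝ)
    (s : Fin (2 ^ r) → Fin r → Bool) : Prop :=
  ∀ i : Fin (2 ^ r),
    Matrix.rank (Matrix.of fun (k : ↥(signBlock U (s i))) (j : Fin r) => U k.1 j) = r

/-- Assumption 2: for consecutive orthants, the observed rank-one matrices
`u*_k (u*_l)ᵀ` with `(k,l) ∈ Ω_{i+1,i}` span `ℝ^{r×r}`. -/
def Assumption2 {n r : ℕ} (U : Matrix (Fin n) (Fin r) ℝ)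
    (s : Fin (2 ^ r) → Fin r → Bool) : Prop :=
  ∀ i : ℕ, ∀ h : i + 1 < 2 ^ r,
    Submodule.span ℝ
      {A : Matrix (Fin r) (Fin r) ℝ |
        ∃ k l : Fin n, k ∈ signBlock U (s ⟨i + 1, h⟩) ∧
          l ∈ signBlock U (s ⟨i, Nat.lt_of_succ_lt h⟩) ∧
          0 ≤ ∑ j, U k j * U l j ∧
          A = Matrix.of fun a b => U k a * U l b} = ⊤

/-!
On a sign block `B_i` every pair of rows is observed, so `(U Dᵀ + D Uᵀ)_Ω = 0` holds on
`B_i × B_i`; as `U*_i` has full column rank, this forces `D_i = U*_i W_i` with `W_i`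
skew-symmetric. For `(k, l) ∈ Ω_{i+1,i}` the observed entries read
`u_lᵀ (W_i - W_{i+1}) u_k = 0`, so Assumption 2 makes consecutive `W_i` equal, hence
`D = U* W` for a single skew `W`. Such a vertical `D` is horizontal only if it vanishes:
`G = U*ᵀ U*` anticommutes with `W`, whence `tr (Dᵀ D) = -tr (W G W) = 0`. The masked map is
thus injective on the horizontal space, and in finite dimension injectivity is a uniform
lower bound.
-/

namespace Matrix

variable {ι κ : Type*} [Fintype κ]

section Field

variable {K : Type*} [Field K]

theorem exists_mul_eq_one_of_rank_eq_card [Fintype ι] [DecidableEq κ] {A : Matrix ι κ K}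
    (hA : A.rank = Fintype.card κ) : ∃ L : Matrix κ ι K, L * A = 1 := by
  have hrange : LinearMap.range Aᵀ.mulVecLin = ⊤ := Submodule.eq_top_of_finrank_eq <| by
    rw [← rank, rank_transpose, hA, Module.finrank_fintype_fun_eq_card]
  obtain ⟨B, hB⟩ :=
    mulVec_surjective_iff_exists_right_inverse.mp (LinearMap.range_eq_top.mp hrange)
  exact ⟨Bᵀ, by rw [← transpose_transpose A, ← transpose_mul, hB, transpose_one]⟩

theorem exists_skew_eq_mul_of_mul_transpose_add_eq_zero [Finite ι] {A E : Matrix ι κ K}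
    (hA : A.rank = Fintype.card κ) (h : A * Eᵀ + E * Aᵀ = 0) :
    ∃ W : Matrix κ κ K, Wᵀ = -W ∧ E = A * W := by
  classical
  have := Fintype.ofFinite ι
  obtain ⟨L, hL⟩ := exists_mul_eq_one_of_rank_eq_card hA
  have hE : E = A * -(L * E)ᵀ := by
    have hEt : Eᵀ = -(L * E * Aᵀ) := by
      rw [← Matrix.one_mul Eᵀ, ← hL, Matrix.mul_assoc, eq_neg_of_add_eq_zero_left h,
        Matrix.mul_neg, Matrix.mul_assoc]
    conv_lhs => rw [← transpose_transpose E, hEt]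
    rw [transpose_neg, transpose_mul, transpose_transpose, Matrix.mul_neg]
  refine ⟨-(L * E)ᵀ, ?_, hE⟩
  have hsandwich : A * (-(L * E)ᵀ + (-(L * E)ᵀ)ᵀ) * Aᵀ = 0 := by
    rw [Matrix.mul_add, Matrix.add_mul, ← hE, Matrix.mul_assoc, ← transpose_mul, ← hE, add_comm, h]
  have hLt : Aᵀ * Lᵀ = 1 := by rw [← transpose_mul, hL, transpose_one]
  have hsum : -(L * E)ᵀ + (-(L * E)ᵀ)ᵀ = 0 := by
    simpa only [← Matrix.mul_assoc, hL, Matrix.one_mul, Matrix.mul_assoc _ Aᵀ Lᵀ, hLt,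
      Matrix.mul_one, Matrix.mul_zero, Matrix.zero_mul] using congr_arg (L * · * Lᵀ) hsandwich
  exact eq_neg_of_add_eq_zero_left (by rwa [add_comm] at hsum)

end Field

section CommRing

variable {R : Type*} [CommRing R]

theorem trace_vecMulVec_mul (x y : κ → R) (M : Matrix κ κ R) :
    (vecMulVec x y * M).trace = y ⬝ᵥ M *ᵥ x := by
  rw [vecMulVec_mul, trace_vecMulVec, dotProduct_comm, dotProduct_mulVec]

theorem eq_zero_of_span_eq_top_of_trace_mul_eq_zero {s : Set (Matrix κ κ R)}
    (hs : Submodule.span R s = ⊤) {M : Matrix κ κ R} (h : ∀ A ∈ s, (A * M).trace = 0) :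
    M = 0 := by
  have hφ : traceLinearMap κ R R ∘ₗ LinearMap.mulRight R M = 0 :=
    LinearMap.ext_on hs fun A hA => h A hA
  exact ext_iff_trace_mul_left.mpr fun X => by
    simpa using LinearMap.congr_fun hφ X

end CommRing

end Matrix

theorem Fin.eq_of_forall_succ_eq {α : Type*} {N : ℕ} {f : Fin N → α}
    (h : ∀ i (hi : i + 1 < N), f ⟨i + 1, hi⟩ = f ⟨i, by omega⟩) (i j : Fin N) : f i = f j := by
  have hzero : ∀ i (hi : i < N), f ⟨i, hi⟩ = f ⟨0, by omega⟩ := by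
    intro i
    induction i with
    | zero => exact fun _ => rfl
    | succ i ih => exact fun hi => (h i hi).trans (ih _)
  exact (hzero i i.2).trans (hzero j j.2).symm

theorem LinearMap.exists_pos_mul_sq_norm_le {E F : Type*} [NormedAddCommGroup E]
    [NormedSpace ℝ E] [FiniteDimensional ℝ E] [NormedAddCommGroup F] [NormedSpace ℝ F]
    (T : E →ₗ[ℝ] F) (p : Submodule ℝ E) (hT : ∀ x ∈ p, T x = 0 → x = 0) :
    ∃ γ > 0, ∀ x ∈ p, γ * ‖x‖ ^ 2 ≤ ‖T x‖ ^ 2 := by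
  have hker : LinearMap.ker (T.domRestrict p) = ⊥ :=
    LinearMap.ker_eq_bot'.mpr fun x hx => Subtype.ext (hT x x.2 hx)
  obtain ⟨K, hK, hanti⟩ := (T.domRestrict p).exists_antilipschitzWith hker
  refine ⟨((K : ℝ) ^ 2)⁻¹, by positivity, fun x hx => ?_⟩
  have hle : ‖x‖ ≤ K * ‖T x‖ := hanti.le_mul_norm (map_zero _) ⟨x, hx⟩
  rw [inv_mul_le_iff₀ (by positivity), ← mul_pow]
  exact pow_le_pow_left₀ (norm_nonneg x) hle 2

section Horizontal

variable {m κ : Type*} [Fintype m]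

def horizontalSpace (U : Matrix m κ ℝ) : Submodule ℝ (Matrix m κ ℝ) where
  carrier := {D | Uᵀ * D = Dᵀ * U}
  add_mem' {D E} (hD : Uᵀ * D = Dᵀ * U) (hE : Uᵀ * E = Eᵀ * U) := by
    show Uᵀ * (D + E) = (D + E)ᵀ * U
    rw [Matrix.mul_add, transpose_add, Matrix.add_mul, hD, hE]
  zero_mem' := by simp
  smul_mem' c D (hD : Uᵀ * D = Dᵀ * U) := by
    show Uᵀ * (c • D) = (c • D)ᵀ * U
    rw [Matrix.mul_smul, transpose_smul, Matrix.smul_mul, hD]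

theorem mem_horizontalSpace {U D : Matrix m κ ℝ} : D ∈ horizontalSpace U ↔ Uᵀ * D = Dᵀ * U :=
  Iff.rfl

theorem mul_eq_zero_of_mem_horizontalSpace [Fintype κ] {U : Matrix m κ ℝ} {W : Matrix κ κ ℝ}
    (hW : Wᵀ = -W) (h : U * W ∈ horizontalSpace U) : U * W = 0 := by
  set G := Uᵀ * U
  have hGW : G * W = -(W * G) := by
    have := mem_horizontalSpace.mp h
    rw [transpose_mul, hW, Matrix.neg_mul, Matrix.neg_mul] at this
    simpa only [G, Matrix.mul_assoc] using this
  have hWGW : (W * G * W).trace = 0 := by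
    have : (W * G * W).trace = -(W * G * W).trace := by
      conv_lhs => rw [Matrix.mul_assoc, trace_mul_comm, hGW, Matrix.neg_mul, trace_neg]
    linarith
  have : ((U * W)ᴴ * (U * W)).trace = 0 := by
    rw [conjTranspose_eq_transpose_of_trivial, transpose_mul, hW, Matrix.mul_assoc,
      ← Matrix.mul_assoc Uᵀ, Matrix.neg_mul, trace_neg, ← Matrix.mul_assoc, hWGW, neg_zero]
  exact trace_conjTranspose_mul_self_eq_zero_iff.mp this

end Horizontal

section Blocks

variable {m κ : Type*} [Fintype κ] {U D : Matrix m κ ℝ}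

theorem exists_skew_forall_mem_eq_vecMul [Finite m] {S : Set m}
    (hS : (U.submatrix (Subtype.val : S → m) id).rank = Fintype.card κ)
    (h : ∀ k ∈ S, ∀ l ∈ S, (U * Dᵀ + D * Uᵀ) k l = 0) :
    ∃ W : Matrix κ κ ℝ, Wᵀ = -W ∧ ∀ k ∈ S, D k = U k ᵥ* W := by
  classical
  have := Fintype.ofFinite m
  set A := U.submatrix (Subtype.val : S → m) id
  set E := D.submatrix (Subtype.val : S → m) id
  have hAE : A * Eᵀ + E * Aᵀ = 0 := by
    ext k l
    exact h k k.2 l l.2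
  obtain ⟨W, hW, hDW⟩ := exists_skew_eq_mul_of_mul_transpose_add_eq_zero hS hAE
  exact ⟨W, hW, fun k hk => (congr_fun hDW ⟨k, hk⟩).trans (mul_apply_eq_vecMul A W _)⟩

theorem eq_of_span_eq_top_of_forall_mem_eq_vecMul [Fintype m] {K L : Set m}
    {W V : Matrix κ κ ℝ} (hW : Wᵀ = -W)
    (hK : ∀ k ∈ K, D k = U k ᵥ* W) (hL : ∀ l ∈ L, D l = U l ᵥ* V)
    (hobs : ∀ k l, 0 ≤ U k ⬝ᵥ U l → (U * Dᵀ + D * Uᵀ) k l = 0)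
    (hspan : Submodule.span ℝ {A : Matrix κ κ ℝ | ∃ k l, k ∈ K ∧ l ∈ L ∧
      0 ≤ ∑ j, U k j * U l j ∧ A = Matrix.of fun a b => U k a * U l b} = ⊤) :
    W = V := by
  refine (sub_eq_zero.mp (eq_zero_of_span_eq_top_of_trace_mul_eq_zero hspan ?_)).symm
  rintro _ ⟨k, l, hk, hl, hkl, rfl⟩
  have hkl' : U k ⬝ᵥ (U l ᵥ* V) + (U k ᵥ* W) ⬝ᵥ U l = 0 := by
    rw [← hL l hl, ← hK k hk]
    exact hobs k l hkl
  have hV : U k ⬝ᵥ (U l ᵥ* V) = U l ⬝ᵥ V *ᵥ U k := by rw [dotProduct_comm, dotProduct_mulVec]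
  have hW' : (U k ᵥ* W) ⬝ᵥ U l = -(U l ⬝ᵥ W *ᵥ U k) := by
    rw [← mulVec_transpose, hW, neg_mulVec, neg_dotProduct, dotProduct_comm]
  change (vecMulVec (U k) (U l) * (V - W)).trace = 0
  rw [trace_vecMulVec_mul, sub_mulVec, dotProduct_sub]
  linarith

end Blocks

section SignBlocks

variable {n r : ℕ} {U : Matrix (Fin n) (Fin r) ℝ}

theorem dotProduct_nonneg_of_mem_signBlock {p : Fin r → Bool} {k l : Fin n}
    (hk : k ∈ signBlock U p) (hl : l ∈ signBlock U p) : 0 ≤ U k ⬝ᵥ U l := by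
  refine Finset.sum_nonneg fun j _ => ?_
  have hkl : 0 < U k j ↔ 0 < U l j := (hk j).trans (hl j).symm
  by_cases hpos : 0 < U k j
  · exact (mul_pos hpos (hkl.mp hpos)).le
  · exact mul_nonneg_of_nonpos_of_nonpos (not_lt.mp hpos) (not_lt.mp (mt hkl.mpr hpos))

theorem exists_mem_signBlock {s : Fin (2 ^ r) → Fin r → Bool} (hs : Function.Surjective s)
    (k : Fin n) : ∃ i, k ∈ signBlock U (s i) := by
  obtain ⟨i, hi⟩ := hs fun j => decide (0 < U k j)
  exact ⟨i, fun j => by simp [hi]⟩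

theorem apply_eq_zero_of_mask_reluSet_eq_zero {X : Matrix (Fin n) (Fin n) ℝ}
    (hX : mask (reluSet (U * Uᵀ)) X = 0) (k l : Fin n) (hkl : 0 ≤ U k ⬝ᵥ U l) : X k l = 0 := by
  have := congr_fun (congr_fun hX k) l
  rwa [mask, of_apply, if_pos (show (k, l) ∈ reluSet (U * Uᵀ) from hkl)] at this

end SignBlocks

theorem eq_zero_of_mask_reluSet_eq_zero {n r : ℕ} {U D : Matrix (Fin n) (Fin r) ℝ}
    {s : Fin (2 ^ r) → Fin r → Bool} (hs : Function.Surjective s)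
    (hA1 : Assumption1 U s) (hA2 : Assumption2 U s) (hD : D ∈ horizontalSpace U)
    (hobs : mask (reluSet (U * Uᵀ)) (U * Dᵀ + D * Uᵀ) = 0) : D = 0 := by
  have hobserved := apply_eq_zero_of_mask_reluSet_eq_zero hobs
  choose W hW hDW using fun i => exists_skew_forall_mem_eq_vecMul (S := signBlock U (s i))
    (by rw [Fintype.card_fin]; exact hA1 i)
    fun k hk l hl => hobserved k l (dotProduct_nonneg_of_mem_signBlock hk hl)
  have hconst : ∀ i j, W i = W j := Fin.eq_of_forall_succ_eq fun i hi =>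
    eq_of_span_eq_top_of_forall_mem_eq_vecMul (hW _) (hDW _) (hDW _) hobserved (hA2 i hi)
  have hDU : D = U * W ⟨0, Nat.two_pow_pos r⟩ := by
    funext k
    obtain ⟨i, hi⟩ := exists_mem_signBlock hs k
    rw [mul_apply_eq_vecMul, hDW i k hi, hconst]
  rw [hDU] at hD ⊢
  exact mul_eq_zero_of_mem_horizontalSpace (hW _) hD

-- The differential at `U` of `V ↦ (V Vᵀ)_Ω`.
@[simps]
def maskedSymmMap {m κ : Type*} [Fintype κ] (Ω : Set (m × m)) (U : Matrix m κ ℝ) :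
    Matrix m κ ℝ →ₗ[ℝ] Matrix m m ℝ where
  toFun D := mask Ω (U * Dᵀ + D * Uᵀ)
  map_add' D E := by
    ext i j
    simp only [mask, of_apply, transpose_add, Matrix.mul_add, Matrix.add_mul, Matrix.add_apply]
    split_ifs <;> ring
  map_smul' c D := by
    ext i j
    simp only [mask, of_apply, transpose_smul, Matrix.mul_smul, Matrix.smul_mul, Matrix.smul_apply,
      Matrix.add_apply, smul_eq_mul, RingHom.id_apply]
    split_ifs <;> ring

section Frobenius

attribute [local instance] Matrix.frobeniusNormedAddCommGroup Matrix.frobeniusNormedSpace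

theorem frobNorm_eq_norm {m κ : Type*} [Fintype m] [Fintype κ] (A : Matrix m κ ℝ) :
    frobNorm A = ‖A‖ := by
  rw [frobNorm, frobenius_norm_def, Real.sqrt_eq_rpow]
  simp [Real.norm_eq_abs]

theorem LinearMap.exists_pos_mul_sq_frobNorm_le {m κ m' κ' : Type*} [Fintype m] [Fintype κ]
    [Fintype m'] [Fintype κ'] (T : Matrix m κ ℝ →ₗ[ℝ] Matrix m' κ' ℝ)
    (p : Submodule ℝ (Matrix m κ ℝ)) (hT : ∀ x ∈ p, T x = 0 → x = 0) :
    ∃ γ > 0, ∀ x ∈ p, γ * frobNorm x ^ 2 ≤ frobNorm (T x) ^ 2 := by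
  simpa only [frobNorm_eq_norm] using T.exists_pos_mul_sq_norm_le p hT

end Frobenius

theorem statement7_general {n r : ℕ}
    (Ustar : Matrix (Fin n) (Fin r) ℝ)
    (s : Fin (2 ^ r) → Fin r → Bool) (hs : IsGrayCode s)
    (hA1 : Assumption1 Ustar s) (hA2 : Assumption2 Ustar s) :
    ∃ γ : ℝ, 0 < γ ∧
      ∀ D : Matrix (Fin n) (Fin r) ℝ, Ustarᵀ * D = Dᵀ * Ustar →
        γ * frobNorm D ^ 2 ≤
            frobNorm (mask (reluSet (Ustar * Ustarᵀ)) (Ustar * Dᵀ + D * Ustarᵀ)) ^ 2 ∧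
          (γ / 2) * frobNorm D ^ 2 ≤
            (1 / 2) *
              frobNorm (mask (reluSet (Ustar * Ustarᵀ)) (Ustar * Dᵀ + D * Ustarᵀ)) ^ 2 := by
  obtain ⟨γ, hγ, hbound⟩ :=
    (maskedSymmMap (reluSet (Ustar * Ustarᵀ)) Ustar).exists_pos_mul_sq_frobNorm_le
      (horizontalSpace Ustar) fun D hD hobs =>
        eq_zero_of_mask_reluSet_eq_zero hs.1.2 hA1 hA2 hD hobs
  refine ⟨γ, hγ, fun D hD => ?_⟩
  have hγD := hbound D hD
  rw [maskedSymmMap_apply] at hγD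
  exact ⟨hγD, by linarith⟩

/-- under ReLU sampling and Assumptions 1 and 2, there is `γ > 0` with
`‖(U* Dᵀ + D U*ᵀ)_Ω‖_F² ≥ γ ‖D‖_F²` for every `D` in the horizontal space at `U*`;
consequently the Hessian quadratic form `D ↦ (1/2)‖(U* Dᵀ + D U*ᵀ)_Ω‖_F²` of `F` at `U*`
is bounded below by `(γ/2)‖D‖_F²` there. -/
theorem statement7 {n r : ℕ} (hn : 0 < n) (hr : 0 < r) (hrn : r ≤ n)
    (Ustar : Matrix (Fin n) (Fin r) ℝ) (hnz : ∀ k j, Ustar k j ≠ 0)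
    (s : Fin (2 ^ r) → Fin r → Bool) (hs : IsGrayCode s)
    (hA1 : Assumption1 Ustar s) (hA2 : Assumption2 Ustar s) :
    ∃ γ : ℝ, 0 < γ ∧
      ∀ D : Matrix (Fin n) (Fin r) ℝ, Ustarᵀ * D = Dᵀ * Ustar →
        γ * frobNorm D ^ 2 ≤
            frobNorm (mask (reluSet (Ustar * Ustarᵀ)) (Ustar * Dᵀ + D * Ustarᵀ)) ^ 2 ∧
          (γ / 2) * frobNorm D ^ 2 ≤
            (1 / 2) *
              frobNorm (mask (reluSet (Ustar * Ustarᵀ)) (Ustar * Dᵀ + D * Ustarᵀ)) ^ 2 :=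
  statement7_general Ustar s hs hA1 hA2
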